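/- For every β > 0 and every p ≥ 1, the integral ∫_{(1,∞)^p} dr₁⋯dr_p / (r₁⋯r_p · (r₁ + ⋯ + r_p)^β) is finite. -/
import Mathlib


open MeasureTheory

/-- for every `β > 0` and `p ≥ 1`,
`∫_{(1,∞)^p} dr / (r₁⋯r_p (r₁+⋯+r_p)^β) < ∞`. -/
theorem integrable_log_density (p : ℕ) (hp : 1 ≤ p) (β : ℝ) (hβ : 0 < β) :
    IntegrableOn
      (fun r : Fin p → ℝ => 1 / ((∏ i, r i) * (∑ i, r i) ^ β))
      (Set.univ.pi fun _ : Fin p => Set.Ioi (1 : ℝ))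
      volume := by
  have hp0 : (0 : ℝ) < p := by positivity
  set a : ℝ := -(1 + β / p) with ha
  have ha1 : a < -1 := by
    have : 0 < β / p := div_pos hβ hp0
    simp only [ha]; linarith
  -- The dominating function: indicator product
  set F : ℝ → ℝ := fun t => (Set.Ioi (1 : ℝ)).indicator (fun t => t ^ a) t with hF
  have hFint : Integrable F := by
    rw [hF, integrable_indicator_iff measurableSet_Ioi]
    exact integrableOn_Ioi_rpow_of_lt ha1 one_pos
  have hGint : Integrable (fun x : Fin p → ℝ => ∏ i, F (x i)) :=
    Integrable.fin_nat_prod (fun _ => hFint)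
  have hS : MeasurableSet (Set.univ.pi fun _ : Fin p => Set.Ioi (1 : ℝ)) :=
    MeasurableSet.univ_pi fun _ => measurableSet_Ioi
  have hGeq : ∀ x : Fin p → ℝ,
      ∏ i, F (x i) = (Set.univ.pi fun _ : Fin p => Set.Ioi (1 : ℝ)).indicator
        (fun x : Fin p → ℝ => ∏ i, (x i) ^ a) x := by
    intro x
    by_cases hx : x ∈ Set.univ.pi fun _ : Fin p => Set.Ioi (1 : ℝ)
    · rw [Set.indicator_of_mem hx]
      refine Finset.prod_congr rfl fun i _ => ?_
      exact Set.indicator_of_mem (hx i (Set.mem_univ i)) _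
    · rw [Set.indicator_of_notMem hx]
      simp only [Set.mem_pi, Set.mem_univ, forall_true_left] at hx
      push_neg at hx
      obtain ⟨i, hi⟩ := hx
      refine Finset.prod_eq_zero (Finset.mem_univ i) ?_
      exact Set.indicator_of_notMem hi _
  have hGint' : IntegrableOn (fun x : Fin p → ℝ => ∏ i, (x i) ^ a)
      (Set.univ.pi fun _ : Fin p => Set.Ioi (1 : ℝ)) := by
    exact (integrable_indicator_iff hS).mp
      (hGint.congr (Filter.Eventually.of_forall hGeq))
  -- measurability of f
  have hfm : AEStronglyMeasurable
      (fun r : Fin p → ℝ => 1 / ((∏ i, r i) * (∑ i, r i) ^ β)) volume := by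
    apply Measurable.aestronglyMeasurable
    apply Measurable.div measurable_const
    apply Measurable.mul
    · exact Finset.measurable_prod _ fun i _ => measurable_pi_apply i
    · have : Measurable fun r : Fin p → ℝ => ∑ i, r i :=
        Finset.measurable_sum _ fun i _ => measurable_pi_apply i
      fun_prop
  refine Integrable.mono' hGint' hfm.restrict ?_
  filter_upwards [ae_restrict_mem hS] with x hx
  have hx1 : ∀ i, 1 < x i := fun i => hx i (Set.mem_univ i)
  have hx0 : ∀ i, 0 < x i := fun i => lt_trans one_pos (hx1 i)
  have hP : 0 < ∏ i, x i := Finset.prod_pos fun i _ => hx0 i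
  have : Nonempty (Fin p) := ⟨⟨0, hp⟩⟩
  have hSsum : 0 < ∑ i, x i := Finset.sum_pos (fun i _ => hx0 i) Finset.univ_nonempty
  have hle : (∏ i, x i) ≤ (∑ i, x i) ^ p := by
    calc (∏ i, x i) ≤ ∏ _i : Fin p, (∑ i, x i) :=
          Finset.prod_le_prod (fun i _ => (hx0 i).le)
            (fun i _ => Finset.single_le_sum (fun j _ => (hx0 j).le) (Finset.mem_univ i))
      _ = (∑ i, x i) ^ p := by simp [Finset.prod_const]
  have key : (∏ i, x i) ^ (1 + β / p) ≤ (∏ i, x i) * (∑ i, x i) ^ β := by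
    rw [Real.rpow_add hP, Real.rpow_one]
    gcongr
    calc (∏ i, x i) ^ (β / p) ≤ ((∑ i, x i) ^ p) ^ (β / p) := by
          gcongr

      _ = (∑ i, x i) ^ β := by
          rw [← Real.rpow_natCast (∑ i, x i) p, ← Real.rpow_mul hSsum.le]
          congr 1
          field_simp
  have hpos : (0:ℝ) < (∏ i, x i) ^ (1 + β / p) := Real.rpow_pos_of_pos hP _
  have hfin : ‖1 / ((∏ i, x i) * (∑ i, x i) ^ β)‖
      = 1 / ((∏ i, x i) * (∑ i, x i) ^ β) := by
    rw [Real.norm_eq_abs, abs_of_pos]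
    positivity
  rw [hfin]
  calc 1 / ((∏ i, x i) * (∑ i, x i) ^ β) ≤ 1 / (∏ i, x i) ^ (1 + β / p) :=
        one_div_le_one_div_of_le hpos key
    _ = ∏ i, (x i) ^ a := by
        rw [Real.finset_prod_rpow _ _ (fun i _ => (hx0 i).le), ha, Real.rpow_neg hP.le,
          one_div]
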